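/- (Roots of multiplicity at least three are purely imaginary.) Let δ₁, δ₂, ρ₁, ρ₂, k₁, k₂ be real constants and consider the complex polynomial P(p) = 2ip·(p − ik₁)²·(p − ik₂)² − δ₁ρ₁²·(p − ik₂)² − δ₂ρ₂²·(p − ik₁)² (a polynomial of degree 5 with leading coefficient 2i, obtained by clearing denominators in the equation Q′(p) = 0 where Q(p) = δ₁ρ₁²/(p − ik₁) + δ₂ρ₂²/(p − ik₂) + ip²). If p₀ ∈ ℂ is a root of P of multiplicity at least 3, then Re p₀ = 0, i.e. p₀ is purely imaginary. -/
import Mathlib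


open Complex Polynomial

noncomputable section

/-- The quintic polynomial obtained by clearing denominators in `Q′(p) = 0`, where
`Q(p) = δ₁ρ₁²/(p − ik₁) + δ₂ρ₂²/(p − ik₂) + ip²`. -/
def Pquintic (δ₁ δ₂ ρ₁ ρ₂ k₁ k₂ : ℝ) : Polynomial ℂ :=
  C (2 * Complex.I) * X * (X - C (Complex.I * k₁)) ^ 2 * (X - C (Complex.I * k₂)) ^ 2
    - C ((δ₁ * ρ₁ ^ 2 : ℝ) : ℂ) * (X - C (Complex.I * k₂)) ^ 2
    - C ((δ₂ * ρ₂ ^ 2 : ℝ) : ℂ) * (X - C (Complex.I * k₁)) ^ 2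

lemma conj_two_mul_I : (starRingEnd ℂ) (2 * Complex.I) = -(2 * Complex.I) := by
  simp [map_mul, map_ofNat]

lemma conj_I_mul_real (k : ℝ) : (starRingEnd ℂ) (Complex.I * k) = -(Complex.I * k) := by
  simp [map_mul]

lemma Pquintic_symm (δ₁ δ₂ ρ₁ ρ₂ k₁ k₂ : ℝ) :
    ((Pquintic δ₁ δ₂ ρ₁ ρ₂ k₁ k₂).map (starRingEnd ℂ)).comp (-X) =
      Pquintic δ₁ δ₂ ρ₁ ρ₂ k₁ k₂ := by
  simp only [Pquintic, Polynomial.map_sub, Polynomial.map_mul, Polynomial.map_pow,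
    map_C, map_X, sub_comp, mul_comp, pow_comp, C_comp, X_comp, neg_comp,
    Complex.conj_I, Complex.conj_ofReal, conj_two_mul_I, conj_I_mul_real, C_neg]
  ring

lemma Pquintic_natDegree (δ₁ δ₂ ρ₁ ρ₂ k₁ k₂ : ℝ) :
    (Pquintic δ₁ δ₂ ρ₁ ρ₂ k₁ k₂).natDegree = 5 := by
  unfold Pquintic
  compute_degree!

lemma Pquintic_ne_zero (δ₁ δ₂ ρ₁ ρ₂ k₁ k₂ : ℝ) :
    Pquintic δ₁ δ₂ ρ₁ ρ₂ k₁ k₂ ≠ 0 := by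
  intro h
  have := Pquintic_natDegree δ₁ δ₂ ρ₁ ρ₂ k₁ k₂
  rw [h] at this
  simp at this

theorem stmt_7 (δ₁ δ₂ ρ₁ ρ₂ k₁ k₂ : ℝ) (p₀ : ℂ)
    (hdvd : (X - C p₀) ^ 3 ∣ Pquintic δ₁ δ₂ ρ₁ ρ₂ k₁ k₂) :
    p₀.re = 0 := by
  by_contra hre
  set q : ℂ := -(starRingEnd ℂ) p₀ with hq
  have hne : p₀ ≠ q := by
    intro h
    apply hre
    have h2 : p₀ + (starRingEnd ℂ) p₀ = 0 := by rw [hq] at h; linear_combination h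
    have := congrArg Complex.re h2
    simp [Complex.add_re, Complex.conj_re] at this
    linarith
  obtain ⟨g, hg⟩ := hdvd
  -- q is also a root of multiplicity ≥ 3
  have hcomp : Pquintic δ₁ δ₂ ρ₁ ρ₂ k₁ k₂ =
      ((X - C ((starRingEnd ℂ) p₀)) ^ 3 * g.map (starRingEnd ℂ)).comp (-X) := by
    conv_lhs => rw [← Pquintic_symm δ₁ δ₂ ρ₁ ρ₂ k₁ k₂, hg]
    simp [Polynomial.map_mul, Polynomial.map_pow, Polynomial.map_sub]
  have hdvd2 : (X - C q) ^ 3 ∣ Pquintic δ₁ δ₂ ρ₁ ρ₂ k₁ k₂ := by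
    refine ⟨-(g.map (starRingEnd ℂ)).comp (-X), ?_⟩
    rw [hcomp]
    simp only [mul_comp, pow_comp, sub_comp, C_comp, X_comp, hq, C_neg]
    ring
  have hcop : IsCoprime ((X - C p₀) ^ 3) ((X - C q) ^ 3) :=
    (isCoprime_X_sub_C_of_isUnit_sub ((sub_ne_zero_of_ne hne).isUnit)).pow
  have hmul : (X - C p₀) ^ 3 * (X - C q) ^ 3 ∣ Pquintic δ₁ δ₂ ρ₁ ρ₂ k₁ k₂ :=
    hcop.mul_dvd ⟨g, hg⟩ hdvd2
  have hle := Polynomial.natDegree_le_of_dvd hmul (Pquintic_ne_zero δ₁ δ₂ ρ₁ ρ₂ k₁ k₂)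
  rw [Pquintic_natDegree] at hle
  have h6 : ((X - C p₀) ^ 3 * (X - C q) ^ 3).natDegree = 6 := by
    rw [Polynomial.natDegree_mul (pow_ne_zero _ (X_sub_C_ne_zero _))
      (pow_ne_zero _ (X_sub_C_ne_zero _))]
    simp [Polynomial.natDegree_pow]
  omega
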